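/- arXiv:1506.02081 — 6 statements merged into one kernel-verified Lean document; each statement's English description precedes it below -/
import Mathlib

section
/- Let {V_k}_{k≥0} be a sequence of non-negative real numbers, let p ≥ 0 and q ≥ 0 be constants with p + q < 1, and let d : ℕ → ℕ satisfy d(k) ≤ d_max for all k, where d_max is a non-negative integer. If V_{k+1} ≤ p·V_k + q·max{ V_ℓ : max(k − d(k), 0) ≤ ℓ ≤ k } for all k ≥ 0, then V_k ≤ r^k · V_0 for all k ≥ 1, where r = (p + q)^{1/(1 + d_max)}. -/
/-! With `r ^ (1 + d_max) = p + q` and `r ≤ 1`, strong induction shows `V k ≤ r ^ k * V 0`: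
every index in the window of step `n` is at least `n - d_max`, so both terms of the recursion are
bounded by `r ^ (n - d_max) * V 0`, and the factor `p + q = r ^ (1 + d_max)` advances the
exponent past `n + 1`. -/

theorem Finset.sup'_Icc_le_of_le_antitone {α β : Type*} [Preorder α] [LocallyFiniteOrder α]
    [SemilatticeSup β] {f g : α → β} (hg : Antitone g) {a b : α}
    (hab : (Finset.Icc a b).Nonempty) (hfg : ∀ x ∈ Finset.Icc a b, f x ≤ g x) :
    (Finset.Icc a b).sup' hab f ≤ g a :=
  Finset.sup'_le hab f fun x hx => (hfg x hx).trans (hg (Finset.mem_Icc.1 hx).1)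

theorem le_pow_mul_of_le_delayed_max {V : ℕ → ℝ} {p q r : ℝ} {d : ℕ → ℕ} {D : ℕ}
    (hV₀ : 0 ≤ V 0) (hp : 0 ≤ p) (hq : 0 ≤ q) (hr₀ : 0 ≤ r) (hr₁ : r ≤ 1)
    (hpq : p + q ≤ r ^ (D + 1)) (hd : ∀ k, d k ≤ D)
    (hrec : ∀ k, V (k + 1) ≤
      p * V k + q * (Finset.Icc (k - d k) k).sup' (Finset.nonempty_Icc.mpr (Nat.sub_le _ _)) V)
    (k : ℕ) : V k ≤ r ^ k * V 0 := by
  have hg : Antitone fun k => r ^ k * V 0 := (pow_right_anti₀ hr₀ hr₁).mul_const hV₀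
  induction k using Nat.strong_induction_on with
  | _ k ih =>
    rcases k with _ | n
    · simp
    have hn : V n ≤ r ^ (n - D) * V 0 := (ih n n.lt_succ_self).trans (hg (Nat.sub_le _ _))
    have hwindow : (Finset.Icc (n - d n) n).sup' (Finset.nonempty_Icc.mpr (Nat.sub_le _ _)) V ≤
        r ^ (n - D) * V 0 := by
      refine (Finset.sup'_Icc_le_of_le_antitone hg _ fun ℓ hℓ => ?_).trans
        (hg (Nat.sub_le_sub_left (hd n) n))
      exact ih ℓ (Nat.lt_succ_of_le (Finset.mem_Icc.1 hℓ).2)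
    calc V (n + 1)
        ≤ p * V n + q * (Finset.Icc (n - d n) n).sup'
            (Finset.nonempty_Icc.mpr (Nat.sub_le _ _)) V := hrec n
      _ ≤ (p + q) * (r ^ (n - D) * V 0) := by
        rw [add_mul]; gcongr
      _ ≤ r ^ (D + 1) * (r ^ (n - D) * V 0) := by gcongr
      _ = r ^ (n - D + (D + 1)) * V 0 := by ring
      _ ≤ r ^ (n + 1) * V 0 := hg (by omega)

theorem Real.rpow_one_div_one_add_natCast_pow {x : ℝ} (hx : 0 ≤ x) (n : ℕ) :
    (x ^ ((1 : ℝ) / (1 + (n : ℝ)))) ^ (n + 1) = x := by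
  have h : (1 : ℝ) / (1 + (n : ℝ)) = ((n + 1 : ℕ) : ℝ)⁻¹ := by push_cast; rw [one_div, add_comm]
  rw [h, Real.rpow_inv_natCast_pow hx n.succ_ne_zero]

/-- Lemma 3.1: a non-negative sequence satisfying a perturbed linear recursion with
bounded-delay shock terms converges linearly with rate `(p+q)^(1/(1+d_max))`. -/
theorem perturbed_linear_convergence
    (V : ℕ → ℝ) (hV : ∀ k, 0 ≤ V k)
    (p q : ℝ) (hp : 0 ≤ p) (hq : 0 ≤ q) (hpq : p + q < 1)
    (d : ℕ → ℕ) (dmax : ℕ) (hd : ∀ k, d k ≤ dmax)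
    (hrec : ∀ k, V (k + 1) ≤
      p * V k + q * (Finset.Icc (k - d k) k).sup' (Finset.nonempty_Icc.mpr (Nat.sub_le _ _)) V) :
    ∀ k, 1 ≤ k → V k ≤ ((p + q) ^ ((1 : ℝ) / (1 + (dmax : ℝ)))) ^ k * V 0 := by
  have hpq₀ : 0 ≤ p + q := add_nonneg hp hq
  intro k _
  refine le_pow_mul_of_le_delayed_max (hV 0) hp hq (Real.rpow_nonneg hpq₀ _)
    (Real.rpow_le_one hpq₀ hpq.le (by positivity)) ?_ hd hrec k
  exact (Real.rpow_one_div_one_add_natCast_pow hpq₀ dmax).ge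
end

section
/- For every k ≥ 0, the gradient error satisfies ‖e^k‖ ≤ L · ∑_{j = max(k−K,0)}^{k−1} ‖x^{j+1} − x^j‖ (the sum being empty when k = 0). -/
lemma telescope_norm {E : Type*} [NormedAddCommGroup E]
    (x : ℕ → E) (a : ℕ) : ∀ b, a ≤ b →
    ‖x b - x a‖ ≤ ∑ j ∈ Finset.Ico a b, ‖x (j+1) - x j‖ := by
  intro b hb
  induction b with
  | zero => simp [Nat.le_zero.mp hb]
  | succ b ih =>
    rcases Nat.lt_or_ge a (b+1) with h | h
    · have hab : a ≤ b := Nat.lt_succ_iff.mp h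
      rw [Finset.sum_Ico_succ_top hab]
      have heq : x (b+1) - x a = (x b - x a) + (x (b+1) - x b) := by abel
      calc ‖x (b+1) - x a‖ = ‖(x b - x a) + (x (b+1) - x b)‖ := by rw [heq]
        _ ≤ ‖x b - x a‖ + ‖x (b+1) - x b‖ := norm_add_le _ _
        _ ≤ _ := by linarith [ih hab]
    · have : a = b+1 := le_antisymm hb h
      simp [this]

/-- The gradient error is bounded by  times the sum of consecutive iterate distances
over the last  steps. -/
theorem iag_grad_error_le_consecutive_sum
    (n m : ℕ) (hm : 1 ≤ m)
    (f : Fin m → EuclideanSpace ℝ (Fin n) → ℝ)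
    (Li : Fin m → ℝ) (hLi : ∀ i, 0 ≤ Li i)
    (L : ℝ) (hL : L = ∑ i, Li i)
    (hconv : ∀ i, ConvexOn ℝ Set.univ (f i))
    (hdiff : ∀ i, Differentiable ℝ (f i))
    (hlip : ∀ i y z, ‖gradient (f i) y - gradient (f i) z‖ ≤ Li i * ‖y - z‖)
    (K : ℕ) (hK : 1 ≤ K)
    (τ : Fin m → ℕ → ℕ)
    (hτ : ∀ i k, k - K ≤ τ i k ∧ τ i k ≤ k)
    (hτ0 : ∀ i, τ i 0 = 0)
    (F : EuclideanSpace ℝ (Fin n) → ℝ) (hF : F = fun y => ∑ i, f i y)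
    (x g e : ℕ → EuclideanSpace ℝ (Fin n))
    (hg : ∀ k, g k = ∑ i, gradient (f i) (x (τ i k)))
    (he : ∀ k, e k = g k - gradient F (x k)) :
    ∀ k, ‖e k‖ ≤ L * ∑ j ∈ Finset.Ico (k - K) k, ‖x (j + 1) - x j‖ := by
  intro k
  -- gradient of the sum
  have hgradF : gradient F (x k) = ∑ i, gradient (f i) (x k) := by
    simp only [gradient, hF]
    rw [fderiv_fun_sum (fun i _ => (hdiff i).differentiableAt)]
    exact map_sum _ _ _
  have hek : e k = ∑ i, (gradient (f i) (x (τ i k)) - gradient (f i) (x k)) := by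
    rw [he, hg, hgradF, ← Finset.sum_sub_distrib]
  set S := ∑ j ∈ Finset.Ico (k - K) k, ‖x (j + 1) - x j‖ with hS
  have hSnonneg : 0 ≤ S := Finset.sum_nonneg fun _ _ => norm_nonneg _
  have hbound : ∀ i : Fin m, ‖gradient (f i) (x (τ i k)) - gradient (f i) (x k)‖ ≤ Li i * S := by
    intro i
    calc ‖gradient (f i) (x (τ i k)) - gradient (f i) (x k)‖
        ≤ Li i * ‖x (τ i k) - x k‖ := hlip i _ _
      _ ≤ Li i * S := by
          apply mul_le_mul_of_nonneg_left _ (hLi i)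
          rw [norm_sub_rev]
          calc ‖x k - x (τ i k)‖ ≤ ∑ j ∈ Finset.Ico (τ i k) k, ‖x (j+1) - x j‖ :=
                telescope_norm x (τ i k) k (hτ i k).2
            _ ≤ S := by
                apply Finset.sum_le_sum_of_subset_of_nonneg
                · apply Finset.Ico_subset_Ico_left (hτ i k).1
                · intro _ _ _; exact norm_nonneg _
  calc ‖e k‖ = ‖∑ i, (gradient (f i) (x (τ i k)) - gradient (f i) (x k))‖ := by rw [hek]
    _ ≤ ∑ i, ‖gradient (f i) (x (τ i k)) - gradient (f i) (x k)‖ := norm_sum_le _ _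
    _ ≤ ∑ i, Li i * S := Finset.sum_le_sum fun i _ => hbound i
    _ = L * S := by rw [hL, Finset.sum_mul]
end

section
/- For every k ≥ 0, the gradient error of the IAG iteration satisfies ‖e^k‖ ≤ γ·L · ∑_{j = max(k−K,0)}^{k−1} ( ‖∇f(x^j)‖ + ‖e^j‖ ) (the sum being empty when k = 0; note e^0 = 0 since τ_i^0 = 0 for all i). -/
/-!
The error `e^k = ∑ᵢ (∇fᵢ(x^{τᵢᵏ}) - ∇fᵢ(x^k))` is controlled, term by term, by `Lᵢ ‖x^{τᵢᵏ} - x^k‖`.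
Since `τᵢᵏ ≥ k - K`, that displacement is at most `γ ∑_{j=k-K}^{k-1} ‖g^j‖`, and
`g^j = ∇f(x^j) + e^j`.
-/

open Finset

theorem gradient_fun_sum {𝕜 F ι : Type*} [RCLike 𝕜] [NormedAddCommGroup F]
    [InnerProductSpace 𝕜 F] [CompleteSpace F] {u : Finset ι} {A : ι → F → 𝕜} {x : F}
    (h : ∀ i ∈ u, DifferentiableAt 𝕜 (A i) x) :
    gradient (fun y => ∑ i ∈ u, A i y) x = ∑ i ∈ u, gradient (A i) x := by
  rw [gradient, fderiv_fun_sum h, map_sum]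
  rfl

theorem norm_sub_le_mul_sum_Ico_norm_of_step {E : Type*} [SeminormedAddCommGroup E]
    [NormedSpace ℝ E] {x g : ℕ → E} {γ : ℝ} (hγ : 0 ≤ γ)
    (hx : ∀ k, x (k + 1) = x k - γ • g k) {a b : ℕ} (hab : a ≤ b) :
    ‖x a - x b‖ ≤ γ * ∑ j ∈ Ico a b, ‖g j‖ := by
  rw [← dist_eq_norm, mul_sum]
  refine (dist_le_Ico_sum_dist x hab).trans_eq (sum_congr rfl fun j _ => ?_)
  rw [dist_eq_norm, hx, sub_sub_cancel, norm_smul, Real.norm_of_nonneg hγ]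

theorem norm_sum_sub_le_of_lipschitz {E F ι : Type*} [SeminormedAddCommGroup E]
    [SeminormedAddCommGroup F] {s : Finset ι} {G : ι → E → F} {c : ι → ℝ}
    (hc : ∀ i ∈ s, 0 ≤ c i) (hG : ∀ i ∈ s, ∀ y z, ‖G i y - G i z‖ ≤ c i * ‖y - z‖)
    {y : ι → E} {z : E} {D : ℝ} (hD : ∀ i ∈ s, ‖y i - z‖ ≤ D) :
    ‖∑ i ∈ s, (G i (y i) - G i z)‖ ≤ (∑ i ∈ s, c i) * D := by
  rw [sum_mul]
  refine (norm_sum_le _ _).trans (sum_le_sum fun i hi => ?_)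
  exact (hG i hi _ _).trans (mul_le_mul_of_nonneg_left (hD i hi) (hc i hi))

theorem iag_grad_error_recursive_bound_general
    (n m : ℕ)
    (f : Fin m → EuclideanSpace ℝ (Fin n) → ℝ)
    (Li : Fin m → ℝ) (hLi : ∀ i, 0 ≤ Li i)
    (L : ℝ) (hL : L = ∑ i, Li i)
    (hdiff : ∀ i, Differentiable ℝ (f i))
    (hlip : ∀ i y z, ‖gradient (f i) y - gradient (f i) z‖ ≤ Li i * ‖y - z‖)
    (K : ℕ)
    (τ : Fin m → ℕ → ℕ)
    (hτ : ∀ i k, k - K ≤ τ i k ∧ τ i k ≤ k)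
    (F : EuclideanSpace ℝ (Fin n) → ℝ) (hF : F = fun y => ∑ i, f i y)
    (x g e : ℕ → EuclideanSpace ℝ (Fin n))
    (hg : ∀ k, g k = ∑ i, gradient (f i) (x (τ i k)))
    (he : ∀ k, e k = g k - gradient F (x k))
    (γ : ℝ) (hγ : 0 < γ)
    (hx : ∀ k, x (k + 1) = x k - γ • g k) :
    ∀ k, ‖e k‖ ≤ γ * L * ∑ j ∈ Finset.Ico (k - K) k, (‖gradient F (x j)‖ + ‖e j‖) := by
  intro k
  set S := ∑ j ∈ Ico (k - K) k, (‖gradient F (x j)‖ + ‖e j‖)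
  have he_sum : e k = ∑ i, (gradient (f i) (x (τ i k)) - gradient (f i) (x k)) := by
    rw [he, hg, hF, gradient_fun_sum fun i _ => (hdiff i).differentiableAt, sum_sub_distrib]
  have hwindow : ∀ i, ∑ j ∈ Ico (τ i k) k, ‖g j‖ ≤ S := fun i => calc
    ∑ j ∈ Ico (τ i k) k, ‖g j‖ ≤ ∑ j ∈ Ico (τ i k) k, (‖gradient F (x j)‖ + ‖e j‖) :=
      sum_le_sum fun j _ => by simpa [he] using norm_add_le (gradient F (x j)) (e j)
    _ ≤ S := sum_le_sum_of_subset_of_nonneg (Ico_subset_Ico (hτ i k).1 le_rfl)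
      fun j _ _ => by positivity
  have hdisp : ∀ i ∈ univ, ‖x (τ i k) - x k‖ ≤ γ * S := fun i _ =>
    (norm_sub_le_mul_sum_Ico_norm_of_step hγ.le hx (hτ i k).2).trans
      (mul_le_mul_of_nonneg_left (hwindow i) hγ.le)
  calc ‖e k‖ ≤ (∑ i, Li i) * (γ * S) := he_sum ▸
        norm_sum_sub_le_of_lipschitz (fun i _ => hLi i) (fun i _ => hlip i) hdisp
    _ = γ * L * S := by rw [hL]; ring

/-- Recursive bound for the gradient error of the IAG iteration in terms of
gradient norms and previous gradient errors. -/
theorem iag_grad_error_recursive_bound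
    (n m : ℕ) (hm : 1 ≤ m)
    (f : Fin m → EuclideanSpace ℝ (Fin n) → ℝ)
    (Li : Fin m → ℝ) (hLi : ∀ i, 0 ≤ Li i)
    (L : ℝ) (hL : L = ∑ i, Li i)
    (hconv : ∀ i, ConvexOn ℝ Set.univ (f i))
    (hdiff : ∀ i, Differentiable ℝ (f i))
    (hlip : ∀ i y z, ‖gradient (f i) y - gradient (f i) z‖ ≤ Li i * ‖y - z‖)
    (K : ℕ) (hK : 1 ≤ K)
    (τ : Fin m → ℕ → ℕ)
    (hτ : ∀ i k, k - K ≤ τ i k ∧ τ i k ≤ k)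
    (hτ0 : ∀ i, τ i 0 = 0)
    (F : EuclideanSpace ℝ (Fin n) → ℝ) (hF : F = fun y => ∑ i, f i y)
    (x g e : ℕ → EuclideanSpace ℝ (Fin n))
    (hg : ∀ k, g k = ∑ i, gradient (f i) (x (τ i k)))
    (he : ∀ k, e k = g k - gradient F (x k))
    (γ : ℝ) (hγ : 0 < γ)
    (hx : ∀ k, x (k + 1) = x k - γ • g k) :
    ∀ k, ‖e k‖ ≤ γ * L * ∑ j ∈ Finset.Ico (k - K) k, (‖gradient F (x j)‖ + ‖e j‖) :=
  iag_grad_error_recursive_bound_general n m f Li hLi L hL hdiff hlip K τ hτ F hF x g e hg he γ hγ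
    hx
end

section
/- For every k ≥ 1, the gradient error of the IAG iteration satisfies ‖e^k‖ ≤ 3·γ·L²·K · max{ dist_ℓ : max(k − 2K, 0) ≤ ℓ ≤ k − 1 }. -/
open Finset

/-- The gradient error of the IAG iteration is bounded by
`3 γ L² K` times the maximal distance to the optimum over the last `2K` iterates. -/
theorem iag_grad_error_le_max_dist
    (n m : ℕ) (hm : 1 ≤ m)
    (f : Fin m → EuclideanSpace ℝ (Fin n) → ℝ)
    (Li : Fin m → ℝ) (hLi : ∀ i, 0 ≤ Li i)
    (L : ℝ) (hL : L = ∑ i, Li i)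
    (hconv : ∀ i, ConvexOn ℝ Set.univ (f i))
    (hdiff : ∀ i, Differentiable ℝ (f i))
    (hlip : ∀ i y z, ‖gradient (f i) y - gradient (f i) z‖ ≤ Li i * ‖y - z‖)
    (K : ℕ) (hK : 1 ≤ K)
    (τ : Fin m → ℕ → ℕ)
    (hτ : ∀ i k, k - K ≤ τ i k ∧ τ i k ≤ k)
    (hτ0 : ∀ i, τ i 0 = 0)
    (F : EuclideanSpace ℝ (Fin n) → ℝ) (hF : F = fun y => ∑ i, f i y)
    (x g e : ℕ → EuclideanSpace ℝ (Fin n))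
    (hg : ∀ k, g k = ∑ i, gradient (f i) (x (τ i k)))
    (he : ∀ k, e k = g k - gradient F (x k))
    (γ : ℝ) (hγ : 0 < γ)
    (hx : ∀ k, x (k + 1) = x k - γ • g k)
    (xs : EuclideanSpace ℝ (Fin n)) (hxs : gradient F xs = 0) :
    ∀ k, ∀ _hk : 1 ≤ k, ‖e k‖ ≤ 3 * γ * L ^ 2 * K *
      (Finset.Icc (k - 2 * K) (k - 1)).sup' (Finset.nonempty_Icc.mpr (by omega))
        (fun ℓ => ‖x ℓ - xs‖) := by
  have hgradF : ∀ y, gradient F y = ∑ i, gradient (f i) y := by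
    intro y
    rw [hF]
    unfold gradient
    rw [fderiv_fun_sum (fun i _ => (hdiff i).differentiableAt), map_sum]
  have hL0 : 0 ≤ L := hL ▸ Finset.sum_nonneg (fun i _ => hLi i)
  -- telescoping
  have tel : ∀ b a, a ≤ b → x a - x b = γ • ∑ ℓ ∈ Finset.Ico a b, g ℓ := by
    intro b
    induction b with
    | zero =>
        intro a ha
        have : a = 0 := Nat.le_zero.mp ha
        subst this
        simp
    | succ b ih =>
        intro a ha
        rcases Nat.lt_or_ge a (b + 1) with h | h
        · have hab : a ≤ b := Nat.lt_succ_iff.mp h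
          rw [Finset.sum_Ico_succ_top hab, smul_add, ← ih a hab]
          have := hx b
          have hb : x b - x (b + 1) = γ • g b := by rw [this]; abel
          rw [← hb]; abel
        · have : a = b + 1 := le_antisymm ha h
          subst this
          simp
  intro k hk
  set M := (Finset.Icc (k - 2 * K) (k - 1)).sup' (Finset.nonempty_Icc.mpr (by omega))
      (fun ℓ => ‖x ℓ - xs‖) with hMdef
  have hdist : ∀ j, k - 2 * K ≤ j → j ≤ k - 1 → ‖x j - xs‖ ≤ M := by
    intro j h1 h2
    exact Finset.le_sup' (fun ℓ => ‖x ℓ - xs‖) (Finset.mem_Icc.mpr ⟨h1, h2⟩)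
  have hM0 : 0 ≤ M :=
    le_trans (norm_nonneg _) (hdist (k - 1) (by omega) le_rfl)
  -- sum of gradients at xs is zero
  have hzero : ∑ i, gradient (f i) xs = 0 := by rw [← hgradF, hxs]
  -- bound on ‖g ℓ‖
  have hgb : ∀ ℓ, k - K ≤ ℓ → ℓ ≤ k - 1 → ‖g ℓ‖ ≤ L * M := by
    intro ℓ h1 h2
    have : g ℓ = ∑ i, (gradient (f i) (x (τ i ℓ)) - gradient (f i) xs) := by
      rw [Finset.sum_sub_distrib, hzero, sub_zero, hg]
    rw [this, hL, Finset.sum_mul]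
    refine le_trans (norm_sum_le _ _) (Finset.sum_le_sum fun i _ => ?_)
    refine le_trans (hlip i _ _) ?_
    have hτi := hτ i ℓ
    have h3 : k - 2 * K ≤ τ i ℓ := by omega
    have h4 : τ i ℓ ≤ k - 1 := by omega
    exact mul_le_mul_of_nonneg_left (hdist _ h3 h4) (hLi i)
  -- bound on ‖x (τ i k) - x k‖
  have hxd : ∀ i : Fin m, ‖x (τ i k) - x k‖ ≤ γ * (K * (L * M)) := by
    intro i
    obtain ⟨h1, h2⟩ := hτ i k
    rw [tel k (τ i k) h2, norm_smul, Real.norm_eq_abs, abs_of_pos hγ]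
    refine mul_le_mul_of_nonneg_left ?_ hγ.le
    refine le_trans (norm_sum_le _ _) ?_
    calc ∑ ℓ ∈ Finset.Ico (τ i k) k, ‖g ℓ‖
        ≤ ∑ ℓ ∈ Finset.Ico (τ i k) k, (L * M) := by
          refine Finset.sum_le_sum fun ℓ hℓ => ?_
          rw [Finset.mem_Ico] at hℓ
          exact hgb ℓ (by omega) (by omega)
      _ = (k - τ i k : ℕ) * (L * M) := by
          rw [Finset.sum_const, Nat.card_Ico, nsmul_eq_mul]
      _ ≤ K * (L * M) := by
          refine mul_le_mul_of_nonneg_right ?_ (mul_nonneg hL0 hM0)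
          exact_mod_cast (by omega : k - τ i k ≤ K)
  -- final bound
  have hek : e k = ∑ i, (gradient (f i) (x (τ i k)) - gradient (f i) (x k)) := by
    rw [Finset.sum_sub_distrib, he, hg, hgradF]
  have : ‖e k‖ ≤ L * (γ * (K * (L * M))) := by
    rw [hek]
    refine le_trans (norm_sum_le _ _) ?_
    calc ∑ i, ‖gradient (f i) (x (τ i k)) - gradient (f i) (x k)‖
        ≤ ∑ i, Li i * (γ * (K * (L * M))) :=
          Finset.sum_le_sum fun i _ =>
            le_trans (hlip i _ _) (mul_le_mul_of_nonneg_left (hxd i) (hLi i))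
      _ = L * (γ * (K * (L * M))) := by rw [← Finset.sum_mul, ← hL]
  refine le_trans this ?_
  have h1 : L * (γ * (K * (L * M))) = 1 * γ * L ^ 2 * K * M := by ring
  rw [h1]
  have hKpos : (0:ℝ) ≤ (K:ℝ) := Nat.cast_nonneg K
  nlinarith [mul_nonneg (mul_nonneg (mul_nonneg hγ.le (sq_nonneg L)) hKpos) hM0]
end

section
/- Suppose 0 < γ ≤ 2/(μ + L). Then for every k ≥ 0 the IAG iterates satisfy dist_{k+1}² ≤ (1 − 2γμL/(μ + L)) · dist_k² + E_k, where E_k = γ²‖e^k‖² − 2γ·⟨x^k − x* − γ∇f(x^k), e^k⟩. -/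
/-!
Write `ψ = F - μ/2 ‖·‖²`. It is convex, and the quadratic upper bound coming from the
`L`-Lipschitz gradient of `F` becomes an `(L - μ)`-quadratic upper bound for `ψ`. Convexity plus a
quadratic upper bound gives cocoercivity of `∇ψ` (Baillon–Haddad), which unfolds to
`μL‖a - b‖² + ‖∇F a - ∇F b‖² ≤ (μ + L)⟪∇F a - ∇F b, a - b⟫`. At `a = xᵏ`, `b = x*` this makes the
exact gradient step `xᵏ - γ∇F(xᵏ)` contract `‖xᵏ - x*‖²` by `1 - 2γμL/(μ + L)` once
`γ ≤ 2/(μ + L)`; the IAG step differs from it by `-γeᵏ`, and expanding the square gives `E_k`.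
-/

open RealInnerProductSpace

theorem le_mul_of_forall_two_mul_sub_mul_sq_mul_le {ℓ N c : ℝ} (hℓ : 0 ≤ ℓ)
    (h : ∀ t, (2 * t - ℓ * t ^ 2) * N ≤ c) : N ≤ ℓ * c := by
  rcases hℓ.eq_or_lt with rfl | hℓ
  · by_contra! hN
    rw [zero_mul] at hN
    have := h ((c + 1) / (2 * N))
    field_simp at this
    linarith
  · have := h ℓ⁻¹
    field_simp at this
    linarith

section Gradient

variable {E : Type*} [NormedAddCommGroup E] [InnerProductSpace ℝ E] [CompleteSpace E]

theorem HasGradientAt.sub {φ ψ : E → ℝ} {g g' p : E} (hφ : HasGradientAt φ g p)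
    (hψ : HasGradientAt ψ g' p) : HasGradientAt (fun y => φ y - ψ y) (g - g') p := by
  rw [hasGradientAt_iff_hasFDerivAt, map_sub]
  exact (hasGradientAt_iff_hasFDerivAt.mp hφ).sub (hasGradientAt_iff_hasFDerivAt.mp hψ)

theorem HasGradientAt.fun_sum {ι : Type*} {s : Finset ι} {φ : ι → E → ℝ} {g : ι → E} {p : E}
    (h : ∀ i ∈ s, HasGradientAt (φ i) (g i) p) :
    HasGradientAt (fun y => ∑ i ∈ s, φ i y) (∑ i ∈ s, g i) p := by
  rw [hasGradientAt_iff_hasFDerivAt, map_sum]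
  exact HasFDerivAt.fun_sum fun i hi => hasGradientAt_iff_hasFDerivAt.mp (h i hi)

theorem hasGradientAt_div_two_mul_norm_sq (μ : ℝ) (p : E) :
    HasGradientAt (fun y : E => μ / 2 * ‖y‖ ^ 2) (μ • p) p := by
  rw [hasGradientAt_iff_hasFDerivAt]
  refine ((hasStrictFDerivAt_norm_sq p).hasFDerivAt.const_mul (μ / 2)).congr_fderiv ?_
  ext w
  simp only [smul_apply, coe_innerSL_apply, nsmul_eq_mul, Nat.cast_ofNat, smul_eq_mul, map_smul,
    InnerProductSpace.toDual_apply_apply]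
  ring

theorem HasGradientAt.hasDerivAt_add_smul {φ : E → ℝ} {g a w : E} {t : ℝ}
    (hφ : HasGradientAt φ g (a + t • w)) :
    HasDerivAt (fun s : ℝ => φ (a + s • w)) ⟪g, w⟫ t := by
  have hline : HasDerivAt (fun s : ℝ => a + s • w) w t := by
    simpa using ((hasDerivAt_id t).smul_const w).const_add a
  have := (hasGradientAt_iff_hasFDerivAt.mp hφ).comp_hasDerivAt t hline
  simp only [InnerProductSpace.toDual_apply_apply] at this
  exact this

variable {φ : E → ℝ} {G : E → E}

theorem ConvexOn.add_inner_gradient_le (hG : ∀ p, HasGradientAt φ (G p) p)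
    (hφ : ConvexOn ℝ Set.univ φ) (a b : E) : φ a + ⟪G a, b - a⟫ ≤ φ b := by
  have hline : ConvexOn ℝ Set.univ (fun t : ℝ => φ (a + t • (b - a))) := by
    have hcomp : (fun t : ℝ => φ (a + t • (b - a))) = φ ∘ AffineMap.lineMap a b := by
      ext t
      simp [AffineMap.lineMap_apply, add_comm]
    simpa [hcomp] using hφ.comp_affineMap (AffineMap.lineMap a b)
  have hderiv : HasDerivAt (fun t : ℝ => φ (a + t • (b - a))) ⟪G a, b - a⟫ 0 :=
    HasGradientAt.hasDerivAt_add_smul (by simpa using hG a)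
  have := hline.le_slope_of_hasDerivAt (Set.mem_univ 0) (Set.mem_univ 1) one_pos hderiv
  simp only [slope_def_field, one_smul, add_sub_cancel, zero_smul, add_zero, sub_zero,
    div_one] at this
  linarith

theorem le_add_inner_gradient_add_sq_of_lipschitz (hG : ∀ p, HasGradientAt φ (G p) p) {ℓ : ℝ}
    (hlip : ∀ p q, ‖G p - G q‖ ≤ ℓ * ‖p - q‖) (a b : E) :
    φ b ≤ φ a + ⟪G a, b - a⟫ + ℓ / 2 * ‖b - a‖ ^ 2 := by
  set w := b - a
  let Φ : ℝ → ℝ := fun t => φ (a + t • w) - t * ⟪G a, w⟫ - ℓ / 2 * t ^ 2 * ‖w‖ ^ 2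
  have hΦ : ∀ t, HasDerivAt Φ (⟪G (a + t • w) - G a, w⟫ - ℓ * t * ‖w‖ ^ 2) t := by
    intro t
    have hsq : HasDerivAt (fun s : ℝ => ℓ / 2 * s ^ 2 * ‖w‖ ^ 2) (ℓ * t * ‖w‖ ^ 2) t := by
      refine (((hasDerivAt_pow 2 t).const_mul (ℓ / 2)).mul_const (‖w‖ ^ 2)).congr_deriv ?_
      push_cast
      ring
    refine ((((hG _).hasDerivAt_add_smul).sub ((hasDerivAt_id t).mul_const _)).sub
      hsq).congr_deriv ?_
    simp [inner_sub_left]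
  have hanti : AntitoneOn Φ (Set.Ici 0) := by
    refine antitoneOn_of_hasDerivWithinAt_nonpos (convex_Ici 0)
      (fun t _ => (hΦ t).continuousAt.continuousWithinAt) (fun t _ => (hΦ t).hasDerivWithinAt)
      fun t ht => ?_
    rw [interior_Ici, Set.mem_Ioi] at ht
    have : ⟪G (a + t • w) - G a, w⟫ ≤ ℓ * t * ‖w‖ ^ 2 :=
      calc ⟪G (a + t • w) - G a, w⟫ ≤ ‖G (a + t • w) - G a‖ * ‖w‖ := real_inner_le_norm _ _
        _ ≤ ℓ * ‖a + t • w - a‖ * ‖w‖ := by gcongr; exact hlip _ _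
        _ = ℓ * t * ‖w‖ ^ 2 := by
          rw [add_sub_cancel_left, norm_smul, Real.norm_of_nonneg ht.le]; ring
    linarith
  have hΦ0 : Φ 0 = φ a := by simp [Φ]
  have hΦ1 : Φ 1 = φ b - ⟪G a, b - a⟫ - ℓ / 2 * ‖b - a‖ ^ 2 := by simp [Φ, w]
  linarith [hanti (Set.mem_Ici.mpr le_rfl) (Set.mem_Ici.mpr zero_le_one) zero_le_one]


theorem ConvexOn.mul_norm_gradient_sub_sq_le_sub_sub_inner (hG : ∀ p, HasGradientAt φ (G p) p)
    (hφ : ConvexOn ℝ Set.univ φ) {ℓ : ℝ}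
    (hdesc : ∀ a b, φ b ≤ φ a + ⟪G a, b - a⟫ + ℓ / 2 * ‖b - a‖ ^ 2) (a b : E) (t : ℝ) :
    (t - ℓ / 2 * t ^ 2) * ‖G b - G a‖ ^ 2 ≤ φ b - φ a - ⟪G a, b - a⟫ := by
  set v := G b - G a
  -- compare the lower and upper bounds at the test point `b - t • (∇φ b - ∇φ a)`
  have hlower := hφ.add_inner_gradient_le hG a (b - t • v)
  have hupper := hdesc b (b - t • v)
  rw [sub_sub_cancel_left, norm_neg, norm_smul, mul_pow, Real.norm_eq_abs, sq_abs,
    inner_neg_right, real_inner_smul_right] at hupper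
  rw [sub_right_comm, inner_sub_right, real_inner_smul_right] at hlower
  have hv : t * ⟪G b, v⟫ - t * ⟪G a, v⟫ = t * ‖v‖ ^ 2 := by
    rw [← mul_sub, ← inner_sub_left, real_inner_self_eq_norm_sq]
  linarith

theorem ConvexOn.norm_gradient_sub_sq_le_mul_inner (hG : ∀ p, HasGradientAt φ (G p) p)
    (hφ : ConvexOn ℝ Set.univ φ) {ℓ : ℝ} (hℓ : 0 ≤ ℓ)
    (hdesc : ∀ a b, φ b ≤ φ a + ⟪G a, b - a⟫ + ℓ / 2 * ‖b - a‖ ^ 2) (a b : E) :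
    ‖G a - G b‖ ^ 2 ≤ ℓ * ⟪G a - G b, a - b⟫ := by
  refine le_mul_of_forall_two_mul_sub_mul_sq_mul_le hℓ fun t => ?_
  have hab := hφ.mul_norm_gradient_sub_sq_le_sub_sub_inner hG hdesc a b t
  have hba := hφ.mul_norm_gradient_sub_sq_le_sub_sub_inner hG hdesc b a t
  rw [norm_sub_rev] at hab
  have hinner : ⟪G a - G b, a - b⟫ = -⟪G a, b - a⟫ - ⟪G b, a - b⟫ := by
    rw [← neg_sub a b, inner_neg_right, inner_sub_left]
    ring
  linarith

theorem StrongConvexOn.mul_norm_sub_sq_add_norm_gradient_sub_sq_le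
    (hG : ∀ p, HasGradientAt φ (G p) p) {μ L : ℝ} (hφ : StrongConvexOn Set.univ μ φ)
    (hlip : ∀ p q, ‖G p - G q‖ ≤ L * ‖p - q‖) (hμL : μ ≤ L) (a b : E) :
    μ * L * ‖a - b‖ ^ 2 + ‖G a - G b‖ ^ 2 ≤ (μ + L) * ⟪G a - G b, a - b⟫ := by
  set ψ : E → ℝ := fun y => φ y - μ / 2 * ‖y‖ ^ 2
  have hψG : ∀ p, HasGradientAt ψ (G p - μ • p) p :=
    fun p => (hG p).sub (hasGradientAt_div_two_mul_norm_sq μ p)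
  have hdesc : ∀ a b, ψ b ≤ ψ a + ⟪G a - μ • a, b - a⟫ + (L - μ) / 2 * ‖b - a‖ ^ 2 := by
    intro a b
    have hφdesc := le_add_inner_gradient_add_sq_of_lipschitz hG hlip a b
    have hsq : μ / 2 * ‖b - a‖ ^ 2 = μ / 2 * ‖b‖ ^ 2 - μ * ⟪a, b⟫ + μ / 2 * ‖a‖ ^ 2 := by
      rw [norm_sub_sq_real, real_inner_comm]
      ring
    rw [inner_sub_right] at hφdesc
    simp only [ψ, inner_sub_left, real_inner_smul_left, inner_sub_right,
      real_inner_self_eq_norm_sq]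
    linarith
  have hco := (strongConvexOn_iff_convex.mp hφ).norm_gradient_sub_sq_le_mul_inner hψG
    (sub_nonneg.mpr hμL) hdesc a b
  rw [show G a - μ • a - (G b - μ • b) = (G a - G b) - μ • (a - b) by module, norm_sub_sq_real,
    real_inner_smul_right, norm_smul, mul_pow, Real.norm_eq_abs, sq_abs,
    inner_sub_left (G a - G b), real_inner_smul_left, real_inner_self_eq_norm_sq] at hco
  linarith

end Gradient

theorem norm_sub_smul_sq_le {E : Type*} [NormedAddCommGroup E] [InnerProductSpace ℝ E]
    {u v : E} {γ μ L : ℝ} (hγ : 0 ≤ γ) (hμL : 0 < μ + L) (hγle : γ ≤ 2 / (μ + L))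
    (h : μ * L * ‖u‖ ^ 2 + ‖v‖ ^ 2 ≤ (μ + L) * ⟪v, u⟫) :
    ‖u - γ • v‖ ^ 2 ≤ (1 - 2 * γ * (μ * L) / (μ + L)) * ‖u‖ ^ 2 := by
  have hγL : γ * (μ + L) ≤ 2 := (le_div_iff₀ hμL).mp hγle
  have hmain : 2 * γ * (μ * L) * ‖u‖ ^ 2 ≤ (μ + L) * (2 * γ * ⟪v, u⟫ - γ ^ 2 * ‖v‖ ^ 2) := by
    nlinarith [mul_le_mul_of_nonneg_left h (by positivity : (0 : ℝ) ≤ 2 * γ),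
      mul_le_mul_of_nonneg_right hγL (by positivity : (0 : ℝ) ≤ γ * ‖v‖ ^ 2)]
  rw [norm_sub_sq_real, norm_smul, mul_pow, Real.norm_of_nonneg hγ, real_inner_smul_right,
    real_inner_comm, sub_mul, one_mul, div_mul_eq_mul_div]
  have hdiv : 2 * γ * (μ * L) * ‖u‖ ^ 2 / (μ + L) ≤ 2 * γ * ⟪v, u⟫ - γ ^ 2 * ‖v‖ ^ 2 := by
    rw [div_le_iff₀ hμL]
    linarith
  linarith

theorem iag_dist_recursion_general
    (n m : ℕ)
    (f : Fin m → EuclideanSpace ℝ (Fin n) → ℝ)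
    (Li : Fin m → ℝ)
    (L : ℝ) (hL : L = ∑ i, Li i)
    (hdiff : ∀ i, Differentiable ℝ (f i))
    (hlip : ∀ i y z, ‖gradient (f i) y - gradient (f i) z‖ ≤ Li i * ‖y - z‖)
    (F : EuclideanSpace ℝ (Fin n) → ℝ) (hF : F = fun y => ∑ i, f i y)
    (x g e : ℕ → EuclideanSpace ℝ (Fin n))
    (he : ∀ k, e k = g k - gradient F (x k))
    (γ : ℝ) (hγ : 0 < γ)
    (hx : ∀ k, x (k + 1) = x k - γ • g k)
    (μ : ℝ) (hμ : 0 < μ) (hμL : μ ≤ L)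
    (hsc : ConvexOn ℝ Set.univ (fun y => F y - μ / 2 * ‖y‖ ^ 2))
    (xs : EuclideanSpace ℝ (Fin n))
    (hgxs : gradient F xs = 0)
    (hγle : γ ≤ 2 / (μ + L)) :
    ∀ k, ‖x (k + 1) - xs‖ ^ 2 ≤ (1 - 2 * γ * (μ * L) / (μ + L)) * ‖x k - xs‖ ^ 2 +
      (γ ^ 2 * ‖e k‖ ^ 2 - 2 * γ * ⟪x k - xs - γ • gradient F (x k), e k⟫) := by
  intro k
  have hFsum : ∀ p, HasGradientAt F (∑ i, gradient (f i) p) p := fun p =>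
    hF ▸ HasGradientAt.fun_sum fun i _ => (hdiff i p).hasGradientAt
  have hFgrad : ∀ p, HasGradientAt F (gradient F p) p := fun p =>
    (hFsum p).differentiableAt.hasGradientAt
  have hFlip : ∀ p q, ‖gradient F p - gradient F q‖ ≤ L * ‖p - q‖ := by
    intro p q
    rw [(hFsum p).gradient, (hFsum q).gradient, ← Finset.sum_sub_distrib, hL, Finset.sum_mul]
    exact (norm_sum_le _ _).trans (Finset.sum_le_sum fun i _ => hlip i p q)
  have hkey := (strongConvexOn_iff_convex.mpr hsc).mul_norm_sub_sq_add_norm_gradient_sub_sq_le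
    hFgrad hFlip hμL (x k) xs
  rw [hgxs, sub_zero] at hkey
  have hcontract := norm_sub_smul_sq_le hγ.le (by linarith) hγle hkey
  have hstep : x (k + 1) - xs = (x k - xs - γ • gradient F (x k)) - γ • e k := by
    rw [hx k, he k]
    module
  rw [hstep, norm_sub_sq_real, norm_smul, mul_pow, Real.norm_of_nonneg hγ.le,
    real_inner_smul_right]
  linarith

/-- One-step contraction inequality for the IAG iterates, up to the gradient-error term `E_k`. -/
theorem iag_dist_recursion
    (n m : ℕ) (hm : 1 ≤ m)
    (f : Fin m → EuclideanSpace ℝ (Fin n) → ℝ)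
    (Li : Fin m → ℝ) (hLi : ∀ i, 0 ≤ Li i)
    (L : ℝ) (hL : L = ∑ i, Li i)
    (hconv : ∀ i, ConvexOn ℝ Set.univ (f i))
    (hdiff : ∀ i, Differentiable ℝ (f i))
    (hlip : ∀ i y z, ‖gradient (f i) y - gradient (f i) z‖ ≤ Li i * ‖y - z‖)
    (K : ℕ) (hK : 1 ≤ K)
    (τ : Fin m → ℕ → ℕ)
    (hτ : ∀ i k, k - K ≤ τ i k ∧ τ i k ≤ k)
    (hτ0 : ∀ i, τ i 0 = 0)
    (F : EuclideanSpace ℝ (Fin n) → ℝ) (hF : F = fun y => ∑ i, f i y)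
    (x g e : ℕ → EuclideanSpace ℝ (Fin n))
    (hg : ∀ k, g k = ∑ i, gradient (f i) (x (τ i k)))
    (he : ∀ k, e k = g k - gradient F (x k))
    (γ : ℝ) (hγ : 0 < γ)
    (hx : ∀ k, x (k + 1) = x k - γ • g k)
    (μ : ℝ) (hμ : 0 < μ) (hμL : μ ≤ L)
    (hsc : ConvexOn ℝ Set.univ (fun y => F y - μ / 2 * ‖y‖ ^ 2))
    (xs : EuclideanSpace ℝ (Fin n))
    (hmin : ∀ y, F xs ≤ F y) (hgxs : gradient F xs = 0)
    (hγle : γ ≤ 2 / (μ + L)) :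
    ∀ k, ‖x (k + 1) - xs‖ ^ 2 ≤ (1 - 2 * γ * (μ * L) / (μ + L)) * ‖x k - xs‖ ^ 2 +
      (γ ^ 2 * ‖e k‖ ^ 2 - 2 * γ * ⟪x k - xs - γ • gradient F (x k), e k⟫) :=
  iag_dist_recursion_general n m f Li L hL hdiff hlip F hF x g e he γ hγ hx μ hμ hμL hsc xs hgxs
    hγle
end

section
/- Suppose 0 < γ ≤ 2/(μ + L). Then for every k ≥ 1 the IAG error term E_k = γ²‖e^k‖² − 2γ·⟨x^k − x* − γ∇f(x^k), e^k⟩ satisfies |E_k| ≤ (9·γ⁴·L⁴·K² + 6·γ²·L²·K) · max{ dist_ℓ² : max(k − 2K, 0) ≤ ℓ ≤ k }. -/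
open RealInnerProductSpace

lemma gradient_sum' {n m : ℕ} (f : Fin m → EuclideanSpace ℝ (Fin n) → ℝ)
    (hdiff : ∀ i, Differentiable ℝ (f i)) (y : EuclideanSpace ℝ (Fin n)) :
    gradient (fun z => ∑ i, f i z) y = ∑ i, gradient (f i) y := by
  unfold gradient
  rw [fderiv_fun_sum (fun i _ => (hdiff i).differentiableAt), map_sum]

set_option maxHeartbeats 1000000 in
/-- Bound on the absolute value of the error term `E_k` of the IAG iteration in terms of
squared distances of recent iterates to the optimum. -/
theorem iag_error_term_bound
    (n m : ℕ) (hm : 1 ≤ m)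
    (f : Fin m → EuclideanSpace ℝ (Fin n) → ℝ)
    (Li : Fin m → ℝ) (hLi : ∀ i, 0 ≤ Li i)
    (L : ℝ) (hL : L = ∑ i, Li i)
    (hconv : ∀ i, ConvexOn ℝ Set.univ (f i))
    (hdiff : ∀ i, Differentiable ℝ (f i))
    (hlip : ∀ i y z, ‖gradient (f i) y - gradient (f i) z‖ ≤ Li i * ‖y - z‖)
    (K : ℕ) (hK : 1 ≤ K)
    (τ : Fin m → ℕ → ℕ)
    (hτ : ∀ i k, k - K ≤ τ i k ∧ τ i k ≤ k)
    (hτ0 : ∀ i, τ i 0 = 0)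
    (F : EuclideanSpace ℝ (Fin n) → ℝ) (hF : F = fun y => ∑ i, f i y)
    (x g e : ℕ → EuclideanSpace ℝ (Fin n))
    (hg : ∀ k, g k = ∑ i, gradient (f i) (x (τ i k)))
    (he : ∀ k, e k = g k - gradient F (x k))
    (γ : ℝ) (hγ : 0 < γ)
    (hx : ∀ k, x (k + 1) = x k - γ • g k)
    (μ : ℝ) (hμ : 0 < μ) (hμL : μ ≤ L)
    (hsc : ConvexOn ℝ Set.univ (fun y => F y - μ / 2 * ‖y‖ ^ 2))
    (xs : EuclideanSpace ℝ (Fin n))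
    (hmin : ∀ y, F xs ≤ F y) (hgxs : gradient F xs = 0)
    (hγle : γ ≤ 2 / (μ + L)) :
    ∀ k, ∀ _hk : 1 ≤ k,
      |γ ^ 2 * ‖e k‖ ^ 2 - 2 * γ * ⟪x k - xs - γ • gradient F (x k), e k⟫| ≤
        (9 * γ ^ 4 * L ^ 4 * K ^ 2 + 6 * γ ^ 2 * L ^ 2 * K) *
          (Finset.Icc (k - 2 * K) k).sup' (Finset.nonempty_Icc.mpr (Nat.sub_le _ _))
            (fun ℓ => ‖x ℓ - xs‖ ^ 2) := by
  intro k _hk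
  have hLpos : 0 < L := lt_of_lt_of_le hμ hμL
  set M : ℝ := (Finset.Icc (k - 2 * K) k).sup' (Finset.nonempty_Icc.mpr (Nat.sub_le _ _))
      (fun ℓ => ‖x ℓ - xs‖ ^ 2) with hMdef
  have hkmem : k ∈ Finset.Icc (k - 2 * K) k := Finset.mem_Icc.mpr ⟨Nat.sub_le _ _, le_rfl⟩
  have hM0 : (0:ℝ) ≤ M :=
    le_trans (sq_nonneg ‖x k - xs‖) (Finset.le_sup' (fun ℓ => ‖x ℓ - xs‖ ^ 2) hkmem)
  set D : ℝ := Real.sqrt M with hDdef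
  have hD0 : 0 ≤ D := Real.sqrt_nonneg _
  have hD2 : D ^ 2 = M := Real.sq_sqrt hM0
  have hdist : ∀ ℓ, k - 2 * K ≤ ℓ → ℓ ≤ k → ‖x ℓ - xs‖ ≤ D := by
    intro ℓ h1 h2
    have hmem : ℓ ∈ Finset.Icc (k - 2 * K) k := Finset.mem_Icc.mpr ⟨h1, h2⟩
    have := Finset.le_sup' (fun ℓ => ‖x ℓ - xs‖ ^ 2) hmem
    calc ‖x ℓ - xs‖ = Real.sqrt (‖x ℓ - xs‖ ^ 2) := (Real.sqrt_sq (norm_nonneg _)).symm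
      _ ≤ D := Real.sqrt_le_sqrt this
  have hgradF : ∀ y, gradient F y = ∑ i, gradient (f i) y := by
    intro y; rw [hF]; exact gradient_sum' f hdiff y
  have hzero : ∑ i, gradient (f i) xs = 0 := by rw [← hgradF]; exact hgxs
  -- bound on ‖g j‖ for recent j
  have hgb : ∀ j, k - K ≤ j → j ≤ k → ‖g j‖ ≤ L * D := by
    intro j h1 h2
    have hgj : g j = ∑ i, (gradient (f i) (x (τ i j)) - gradient (f i) xs) := by
      rw [hg, Finset.sum_sub_distrib, hzero, sub_zero]
    rw [hgj]
    calc ‖∑ i, (gradient (f i) (x (τ i j)) - gradient (f i) xs)‖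
        ≤ ∑ i, ‖gradient (f i) (x (τ i j)) - gradient (f i) xs‖ := norm_sum_le _ _
      _ ≤ ∑ i, Li i * D := by
          refine Finset.sum_le_sum fun i _ => le_trans (hlip i _ xs) ?_
          refine mul_le_mul_of_nonneg_left (hdist _ ?_ ?_) (hLi i)
          · have := (hτ i j).1; omega
          · exact le_trans (hτ i j).2 h2
      _ = L * D := by rw [← Finset.sum_mul, ← hL]
  -- telescoping
  have htel : ∀ a b, a ≤ b → x b = x a - γ • ∑ j ∈ Finset.Ico a b, g j := by
    intro a b hab
    induction b, hab using Nat.le_induction with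
    | base => simp
    | succ b hab ih =>
        rw [hx b, ih, Finset.sum_Ico_succ_top hab, smul_add, sub_sub]
  -- bound on ‖x (τ i k) - x k‖
  have hxk : ∀ i : Fin m, ‖x (τ i k) - x k‖ ≤ γ * K * (L * D) := by
    intro i
    have hab : τ i k ≤ k := (hτ i k).2
    have hx' := htel (τ i k) k hab
    have heq : x (τ i k) - x k = γ • ∑ j ∈ Finset.Ico (τ i k) k, g j := by
      rw [hx']; abel
    rw [heq, norm_smul, Real.norm_eq_abs, abs_of_pos hγ]
    have hsum : ‖∑ j ∈ Finset.Ico (τ i k) k, g j‖ ≤ (k - τ i k : ℕ) * (L * D) := by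
      calc ‖∑ j ∈ Finset.Ico (τ i k) k, g j‖ ≤ ∑ j ∈ Finset.Ico (τ i k) k, ‖g j‖ :=
            norm_sum_le _ _
        _ ≤ ∑ j ∈ Finset.Ico (τ i k) k, (L * D) := by
            refine Finset.sum_le_sum fun j hj => ?_
            rw [Finset.mem_Ico] at hj
            have h1 := (hτ i k).1
            exact hgb j (by omega) (le_of_lt hj.2)
        _ = (k - τ i k : ℕ) * (L * D) := by
            rw [Finset.sum_const, Nat.card_Ico, nsmul_eq_mul]
    have hcard : ((k - τ i k : ℕ) : ℝ) ≤ (K : ℝ) := by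
      have h1 := (hτ i k).1
      exact_mod_cast Nat.cast_le.mpr (by omega : k - τ i k ≤ K)
    calc γ * ‖∑ j ∈ Finset.Ico (τ i k) k, g j‖ ≤ γ * ((k - τ i k : ℕ) * (L * D)) :=
          mul_le_mul_of_nonneg_left hsum (le_of_lt hγ)
      _ ≤ γ * (K * (L * D)) := by
          refine mul_le_mul_of_nonneg_left (mul_le_mul_of_nonneg_right hcard ?_) (le_of_lt hγ)
          positivity
      _ = γ * K * (L * D) := by ring
  -- bound on ‖e k‖
  have heb : ‖e k‖ ≤ L * (γ * K * (L * D)) := by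
    have hek : e k = ∑ i, (gradient (f i) (x (τ i k)) - gradient (f i) (x k)) := by
      rw [he, hg, hgradF, Finset.sum_sub_distrib]
    rw [hek]
    calc ‖∑ i, (gradient (f i) (x (τ i k)) - gradient (f i) (x k))‖
        ≤ ∑ i, ‖gradient (f i) (x (τ i k)) - gradient (f i) (x k)‖ := norm_sum_le _ _
      _ ≤ ∑ i, Li i * (γ * K * (L * D)) := by
          refine Finset.sum_le_sum fun i _ => le_trans (hlip i _ _) ?_
          exact mul_le_mul_of_nonneg_left (hxk i) (hLi i)
      _ = L * (γ * K * (L * D)) := by rw [← Finset.sum_mul, ← hL]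
  -- bound on ‖gradient F (x k)‖
  have hFb : ‖gradient F (x k)‖ ≤ L * D := by
    have hFk : gradient F (x k) = ∑ i, (gradient (f i) (x k) - gradient (f i) xs) := by
      rw [hgradF, Finset.sum_sub_distrib, hzero, sub_zero]
    rw [hFk]
    calc ‖∑ i, (gradient (f i) (x k) - gradient (f i) xs)‖
        ≤ ∑ i, ‖gradient (f i) (x k) - gradient (f i) xs‖ := norm_sum_le _ _
      _ ≤ ∑ i, Li i * D := by
          refine Finset.sum_le_sum fun i _ => le_trans (hlip i _ _) ?_
          exact mul_le_mul_of_nonneg_left (hdist k (Nat.sub_le _ _) le_rfl) (hLi i)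
      _ = L * D := by rw [← Finset.sum_mul, ← hL]
  -- final combination
  set A : ℝ := ‖e k‖ with hA
  set v : EuclideanSpace ℝ (Fin n) := x k - xs - γ • gradient F (x k) with hv
  set B : ℝ := ‖v‖ with hB
  have hA0 : 0 ≤ A := norm_nonneg _
  have hB0 : 0 ≤ B := norm_nonneg _
  have hBb : B ≤ D + γ * (L * D) := by
    calc B ≤ ‖x k - xs‖ + ‖γ • gradient F (x k)‖ := norm_sub_le _ _
      _ ≤ D + γ * (L * D) := by
          refine add_le_add (hdist k (Nat.sub_le _ _) le_rfl) ?_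
          rw [norm_smul, Real.norm_eq_abs, abs_of_pos hγ]
          exact mul_le_mul_of_nonneg_left hFb (le_of_lt hγ)
  have habs : |γ ^ 2 * A ^ 2 - 2 * γ * ⟪v, e k⟫| ≤ γ ^ 2 * A ^ 2 + 2 * γ * (B * A) := by
    have h1 : |γ ^ 2 * A ^ 2 - 2 * γ * ⟪v, e k⟫| ≤ |γ ^ 2 * A ^ 2| + |2 * γ * ⟪v, e k⟫| := by
      rw [sub_eq_add_neg]
      exact (abs_add_le _ _).trans (by rw [abs_neg])
    have h2 : |γ ^ 2 * A ^ 2| = γ ^ 2 * A ^ 2 := abs_of_nonneg (by positivity)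
    have h3 : |2 * γ * ⟪v, e k⟫| ≤ 2 * γ * (B * A) := by
      rw [abs_mul, abs_of_pos (by positivity : (0:ℝ) < 2 * γ)]
      exact mul_le_mul_of_nonneg_left (abs_real_inner_le_norm v (e k)) (by positivity)
    linarith
  have hKr : (1:ℝ) ≤ (K : ℝ) := by exact_mod_cast hK
  have hAb : A ≤ γ * L ^ 2 * K * D := by
    calc A ≤ L * (γ * K * (L * D)) := heb
      _ = γ * L ^ 2 * K * D := by ring
  rw [← hD2]
  refine le_trans habs ?_
  have h1 : A * A ≤ (γ * L ^ 2 * K * D) * (γ * L ^ 2 * K * D) :=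
    mul_le_mul hAb hAb hA0 (by positivity)
  have h2 : B * A ≤ (D + γ * (L * D)) * (γ * L ^ 2 * K * D) :=
    mul_le_mul hBb hAb hA0 (by positivity)
  have h1' : γ ^ 2 * (A * A) ≤ γ ^ 2 * ((γ * L ^ 2 * K * D) * (γ * L ^ 2 * K * D)) :=
    mul_le_mul_of_nonneg_left h1 (by positivity)
  have h2' : 2 * γ * (B * A) ≤ 2 * γ * ((D + γ * (L * D)) * (γ * L ^ 2 * K * D)) :=
    mul_le_mul_of_nonneg_left h2 (by positivity)
  nlinarith [h1', h2',
    mul_nonneg (sq_nonneg (γ ^ 2 * L ^ 2 * K - γ * L)) (sq_nonneg D),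
    mul_nonneg (mul_nonneg (sub_nonneg.mpr hKr) (by positivity : (0:ℝ) ≤ γ ^ 2 * L ^ 2)) (sq_nonneg D),
    mul_nonneg (by positivity : (0:ℝ) ≤ γ ^ 4 * L ^ 4 * (K:ℝ) ^ 2) (sq_nonneg D),
    mul_nonneg (by positivity : (0:ℝ) ≤ γ ^ 2 * L ^ 2 * (K:ℝ)) (sq_nonneg D)]
end
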